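/- Let δ ≥ 0, K ≥ 0, v⁰ ∈ ℝ^{m+1} with ‖v⁰‖ ≤ δ, and let ψ : [0,∞) → ℝ^{m+1} be measurable with ‖ψ(t)‖ ≤ K·e^{−σt} for all t ≥ 0. Then for all t ≥ 0: |(Πψ)₀(t)| ≤ e^{−σt}·(δ + K·c₀) and |(Πψ)_j(t)| ≤ e^{−σt}·(δ + K·c_j) for j = 1,…,m, where c₀ = l₀√(2m)/(k₀−σ) + l_J·e^{(k₀−σ)ω}/(1 − e^{−(k₀−σ)ω}) and c_j = 2l_j/(k_j−σ). (This is the invariance estimate for the operator Π in the proof of Theorem 3.) -/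

import Mathlib

/-! The three parts of `Πψ` are estimated separately. The free part decays like
`e^{-k t} ≤ e^{-σ t}`. The integral part is dominated by the explicit convolution
`∫₀ᵗ e^{-k(t-s)} e^{-σ s} ds = (e^{-σ t} - e^{-k t}) / (k - σ)`. In the impulse sum, condition
(C4) confines the indices to `0 ≤ i < ⌈t/ω⌉`, and `θ_i < (i+1)ω` bounds the `i`-th term by
`e^{-k t} q^{i+1}` with `q = e^{(k-σ)ω}`; since `⌈t/ω⌉ω < t + ω`, the geometric sum is at most
`e^{(k-σ)t} q / (1 - q⁻¹)`. -/

/-- The Euclidean norm on `Fin n → ℝ`. -/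
noncomputable def eNorm {n : ℕ} (v : Fin n → ℝ) : ℝ := Real.sqrt (∑ j, v j ^ 2)

/-- The operator `Π` from the proof of Theorem 3: coordinate `0` gets
`(Πψ)₀(t) = e^{−k₀t}v⁰₀ + ∫₀^t e^{−k₀(t−s)} w₀(ψ(s)) ds
  + Σ_{0 ≤ θ_i < t} e^{−k₀(t−θ_i)} u₀(ψ₀(θ_i))`,
and the coordinates `j = 1,…,m` get
`(Πψ)_j(t) = e^{−k_jt}v⁰_j + ∫₀^t e^{−k_j(t−s)} w_j(ψ₀(s), ψ_j(s)) ds`. -/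
noncomputable def PiOp (m : ℕ) (θ : ℤ → ℝ) (k : Fin (m + 1) → ℝ)
    (w₀ : (Fin (m + 1) → ℝ) → ℝ) (w : Fin (m + 1) → ℝ → ℝ → ℝ) (u₀ : ℝ → ℝ)
    (v0 : Fin (m + 1) → ℝ) (ψ : ℝ → Fin (m + 1) → ℝ) : ℝ → Fin (m + 1) → ℝ := fun t j =>
  if j = 0 then
    Real.exp (-(k 0) * t) * v0 0
      + (∫ s in (0:ℝ)..t, Real.exp (-(k 0) * (t - s)) * w₀ (ψ s))
      + ∑' i : ℤ, (if 0 ≤ θ i ∧ θ i < t then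
          Real.exp (-(k 0) * (t - θ i)) * u₀ (ψ (θ i) 0) else 0)
  else
    Real.exp (-(k j) * t) * v0 j
      + ∫ s in (0:ℝ)..t, Real.exp (-(k j) * (t - s)) * w j (ψ s 0) (ψ s j)

open Real Set Finset

lemma abs_le_eNorm {n : ℕ} (v : Fin n → ℝ) (j : Fin n) : |v j| ≤ eNorm v := by
  rw [eNorm, ← sqrt_sq_eq_abs]
  exact sqrt_le_sqrt (single_le_sum (fun i _ => sq_nonneg (v i)) (mem_univ j))

lemma abs_exp_mul_le_of_abs_le {κ σ t x δ : ℝ} (hσκ : σ ≤ κ) (ht : 0 ≤ t) (hx : |x| ≤ δ) :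
    |exp (-κ * t) * x| ≤ exp (-σ * t) * δ := by
  rw [abs_mul, abs_exp]
  exact mul_le_mul (exp_le_exp.mpr (by nlinarith)) hx (abs_nonneg _) (exp_pos _).le

lemma integral_exp_mul_exp_eq {κ σ : ℝ} (hσκ : σ < κ) (t : ℝ) :
    ∫ s in (0:ℝ)..t, exp (-κ * (t - s)) * exp (-σ * s)
      = (exp (-σ * t) - exp (-κ * t)) / (κ - σ) := by
  have hc : κ - σ ≠ 0 := sub_ne_zero.mpr hσκ.ne'
  have hexp : ∀ s, exp (-κ * (t - s)) * exp (-σ * s) = exp ((κ - σ) * s + -κ * t) := fun s => by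
    rw [← exp_add]; ring_nf
  have hF : ∀ s, HasDerivAt (fun s => exp ((κ - σ) * s + -κ * t) / (κ - σ))
      (exp ((κ - σ) * s + -κ * t)) s := fun s => by
    have := ((((hasDerivAt_id s).const_mul (κ - σ)).add_const (-κ * t)).exp).div_const (κ - σ)
    simp only [id, mul_one] at this
    rwa [mul_div_cancel_right₀ _ hc] at this
  simp_rw [hexp]
  rw [intervalIntegral.integral_eq_sub_of_hasDerivAt (fun s _ => hF s)
    (Continuous.intervalIntegrable (by fun_prop) _ _), ← hexp, ← hexp]
  simp only [sub_zero, sub_self, mul_zero, exp_zero, mul_one, one_mul]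
  ring

lemma abs_integral_exp_mul_le {κ σ C t : ℝ} {g : ℝ → ℝ} (hσκ : σ < κ) (hC : 0 ≤ C)
    (ht : 0 ≤ t) (hg : ∀ s ∈ Ioc 0 t, |g s| ≤ C * exp (-σ * s)) :
    |∫ s in (0:ℝ)..t, exp (-κ * (t - s)) * g s| ≤ exp (-σ * t) * (C / (κ - σ)) := calc
  _ ≤ ∫ s in (0:ℝ)..t, C * (exp (-κ * (t - s)) * exp (-σ * s)) := by
    rw [← Real.norm_eq_abs]
    refine intervalIntegral.norm_integral_le_of_norm_le ht
      (Filter.Eventually.of_forall fun s hs => ?_) (Continuous.intervalIntegrable (by fun_prop) _ _)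
    rw [Real.norm_eq_abs, abs_mul, abs_exp, mul_left_comm]
    exact mul_le_mul_of_nonneg_left (hg s hs) (exp_pos _).le
  _ ≤ C * (exp (-σ * t) / (κ - σ)) := by
    rw [intervalIntegral.integral_const_mul, integral_exp_mul_exp_eq hσκ]
    gcongr
    linarith [exp_pos (-κ * t)]
  _ = _ := by ring

lemma geom_sum_exp_le {c ω t : ℝ} (hc : 0 < c) (hω : 0 < ω) (ht : 0 ≤ t) :
    ∑ i ∈ range ⌈t / ω⌉₊, exp (c * ω) ^ (i + 1)
      ≤ exp (c * t) * (exp (c * ω) / (1 - exp (-(c * ω)))) := by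
  set q := exp (c * ω)
  set n := ⌈t / ω⌉₊
  have hq : 1 < q := one_lt_exp_iff.mpr (mul_pos hc hω)
  have hnω : n * ω < t + ω := by
    calc n * ω < (t / ω + 1) * ω := by gcongr; exact Nat.ceil_lt_add_one (by positivity)
      _ = t + ω := by field_simp
  have hqn : q ^ n ≤ exp (c * t) * q := by
    rw [← exp_nat_mul, ← exp_add, exp_le_exp]
    nlinarith
  calc ∑ i ∈ range n, q ^ (i + 1) = q * ((q ^ n - 1) / (q - 1)) := by
        rw [← geom_sum_eq hq.ne', mul_sum]
        simp only [pow_succ, mul_comm]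
    _ ≤ q * (exp (c * t) * q / (q - 1)) := by
        gcongr
        linarith
    _ = exp (c * t) * (q / (1 - exp (-(c * ω)))) := by
        rw [exp_neg]
        change _ = _ * (q / (1 - q⁻¹))
        have : q - 1 ≠ 0 := by linarith
        field_simp

lemma mem_map_range_ceil_of_mem_Ico {ω t : ℝ} {θ : ℤ → ℝ} (hω : 0 < ω)
    (hθ : ∀ i : ℤ, (i : ℝ) * ω ≤ θ i ∧ θ i < ((i : ℝ) + 1) * ω) {i : ℤ} (hi : θ i ∈ Ico 0 t) :
    i ∈ (range ⌈t / ω⌉₊).map Nat.castEmbedding := by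
  obtain ⟨hlo, hhi⟩ := hθ i
  have hi0 : 0 ≤ i := by
    have : (-1 : ℝ) < i := by nlinarith [hi.1.trans_lt hhi]
    have : (-1 : ℤ) < i := by exact_mod_cast this
    omega
  lift i to ℕ using hi0
  refine mem_map_of_mem _ (mem_range.mpr (Nat.lt_ceil.mpr ?_))
  rw [lt_div_iff₀ hω]
  exact_mod_cast hlo.trans_lt hi.2

lemma abs_tsum_jump_le {κ σ ω C t : ℝ} {θ u : ℤ → ℝ} (hσκ : σ < κ) (hω : 0 < ω) (hC : 0 ≤ C)
    (ht : 0 ≤ t) (hθ : ∀ i : ℤ, (i : ℝ) * ω ≤ θ i ∧ θ i < ((i : ℝ) + 1) * ω)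
    (hu : ∀ i, 0 ≤ θ i → |u i| ≤ C * exp (-σ * θ i)) :
    |∑' i, if 0 ≤ θ i ∧ θ i < t then exp (-κ * (t - θ i)) * u i else 0|
      ≤ exp (-σ * t) * (C * (exp ((κ - σ) * ω) / (1 - exp (-((κ - σ) * ω))))) := by
  set f : ℤ → ℝ := fun i => if 0 ≤ θ i ∧ θ i < t then exp (-κ * (t - θ i)) * u i else 0
  set q := exp ((κ - σ) * ω)
  have hsupp : ∀ i ∉ (range ⌈t / ω⌉₊).map Nat.castEmbedding, f i = 0 := fun i hi =>
    if_neg fun h => hi (mem_map_range_ceil_of_mem_Ico hω hθ h)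
  have hterm : ∀ i ∈ range ⌈t / ω⌉₊, |f i| ≤ C * exp (-κ * t) * q ^ (i + 1) := by
    intro i _
    simp only [f]
    split_ifs with h
    · have hθi : θ i < (i + 1) * ω := by exact_mod_cast (hθ i).2
      calc |exp (-κ * (t - θ i)) * u i|
          ≤ exp (-κ * (t - θ i)) * (C * exp (-σ * θ i)) := by
            rw [abs_mul, abs_exp]; exact mul_le_mul_of_nonneg_left (hu i h.1) (exp_pos _).le
        _ = C * exp (-κ * t) * exp ((κ - σ) * θ i) := by
            rw [mul_assoc, ← exp_add, mul_left_comm, ← exp_add]; ring_nf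
        _ ≤ C * exp (-κ * t) * q ^ (i + 1) := by
            rw [← exp_nat_mul]
            gcongr C * exp (-κ * t) * exp ?_
            push_cast
            nlinarith
    · rw [abs_zero]; positivity
  have hexp : exp (-κ * t) * exp ((κ - σ) * t) = exp (-σ * t) := by rw [← exp_add]; ring_nf
  calc |∑' i, f i| = |∑ i ∈ range ⌈t / ω⌉₊, f i| := by rw [tsum_eq_sum hsupp, sum_map]; rfl
    _ ≤ ∑ i ∈ range ⌈t / ω⌉₊, C * exp (-κ * t) * q ^ (i + 1) :=
      (abs_sum_le_sum_abs _ _).trans (sum_le_sum hterm)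
    _ ≤ C * exp (-κ * t) * (exp ((κ - σ) * t) * (q / (1 - exp (-((κ - σ) * ω))))) := by
      rw [← mul_sum]
      gcongr
      exact geom_sum_exp_le (sub_pos.mpr hσκ) hω ht
    _ = _ := by rw [← hexp]; ring

theorem stmt12_general
    (m : ℕ) (ω : ℝ) (hω : 0 < ω) (θ : ℤ → ℝ)
    (hθ : ∀ i : ℤ, (i : ℝ) * ω ≤ θ i ∧ θ i < ((i : ℝ) + 1) * ω)
    (k : Fin (m + 1) → ℝ)
    (l : Fin (m + 1) → ℝ) (lJ : ℝ) (hl : ∀ j, 0 ≤ l j) (hlJ : 0 ≤ lJ)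
    (w₀ : (Fin (m + 1) → ℝ) → ℝ) (w : Fin (m + 1) → ℝ → ℝ → ℝ) (u₀ : ℝ → ℝ)
    (σ : ℝ) (hσk : ∀ j, σ < k j)
    (hw₀bd : ∀ v : Fin (m + 1) → ℝ, |w₀ v| ≤ l 0 * Real.sqrt (2 * m) * eNorm v)
    (hwbd : ∀ j, j ≠ 0 → ∀ a b : ℝ, |w j a b| ≤ l j * (|a| + |b|))
    (hu₀bd : ∀ z : ℝ, |u₀ z| ≤ lJ * |z|)
    (δ K : ℝ) (hK : 0 ≤ K)
    (v0 : Fin (m + 1) → ℝ) (hv0 : eNorm v0 ≤ δ)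
    (ψ : ℝ → Fin (m + 1) → ℝ)
    (hψbd : ∀ t : ℝ, 0 ≤ t → eNorm (ψ t) ≤ K * Real.exp (-σ * t)) :
    ∀ t : ℝ, 0 ≤ t →
      |PiOp m θ k w₀ w u₀ v0 ψ t 0| ≤
        Real.exp (-σ * t) * (δ + K * (l 0 * Real.sqrt (2 * m) / (k 0 - σ) + lJ * Real.exp ((k 0 - σ) * ω) / (1 - Real.exp (-((k 0 - σ) * ω))))) ∧
      ∀ j, j ≠ 0 → |PiOp m θ k w₀ w u₀ v0 ψ t j| ≤
        Real.exp (-σ * t) * (δ + K * (2 * l j / (k j - σ))) := by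
  intro t ht
  have hψj (s : ℝ) (hs : 0 ≤ s) (j : Fin (m + 1)) : |ψ s j| ≤ K * exp (-σ * s) :=
    (abs_le_eNorm (ψ s) j).trans (hψbd s hs)
  have hinit (j : Fin (m + 1)) : |exp (-k j * t) * v0 j| ≤ exp (-σ * t) * δ :=
    abs_exp_mul_le_of_abs_le (hσk j).le ht ((abs_le_eNorm v0 j).trans hv0)
  refine ⟨?_, fun j hj => ?_⟩
  · have hL : 0 ≤ l 0 * √(2 * m) := mul_nonneg (hl 0) (sqrt_nonneg _)
    have hint := abs_integral_exp_mul_le (g := fun s => w₀ (ψ s)) (hσk 0) (mul_nonneg hL hK) ht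
      fun s hs => (hw₀bd _).trans <|
        (mul_le_mul_of_nonneg_left (hψbd s hs.1.le) hL).trans_eq (mul_assoc _ _ _).symm
    have hjump := abs_tsum_jump_le (u := fun i => u₀ (ψ (θ i) 0)) (hσk 0) hω (mul_nonneg hlJ hK)
      ht hθ fun i hi => (hu₀bd _).trans <|
        (mul_le_mul_of_nonneg_left (hψj _ hi 0) hlJ).trans_eq (mul_assoc _ _ _).symm
    rw [PiOp, if_pos rfl]
    calc _ ≤ _ := abs_add_three _ _ _
      _ ≤ _ := add_le_add_three (hinit 0) hint hjump
      _ = _ := by ring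
  · have hint := abs_integral_exp_mul_le (g := fun s => w j (ψ s 0) (ψ s j)) (hσk j)
      (mul_nonneg (mul_nonneg zero_le_two (hl j)) hK) ht fun s hs => (hwbd j hj _ _).trans <| by
        have := add_le_add (hψj s hs.1.le 0) (hψj s hs.1.le j)
        nlinarith [hl j]
    rw [PiOp, if_neg hj]
    calc _ ≤ _ := abs_add_le _ _
      _ ≤ _ := add_le_add (hinit j) hint
      _ = _ := by ring

/-- invariance estimate for `Π`, proof of Theorem 3: if `‖v⁰‖ ≤ δ` and
`‖ψ(t)‖ ≤ K·e^{−σt}` for `t ≥ 0`, then `|(Πψ)₀(t)| ≤ e^{−σt}(δ + K·c₀)` and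
`|(Πψ)_j(t)| ≤ e^{−σt}(δ + K·c_j)`, where
`c₀ = l₀√(2m)/(k₀−σ) + l_J·e^{(k₀−σ)ω}/(1 − e^{−(k₀−σ)ω})` and `c_j = 2l_j/(k_j−σ)`. -/
theorem stmt12
    (m : ℕ) (hm : 1 ≤ m) (ω : ℝ) (hω : 0 < ω) (θ : ℤ → ℝ)
    (hθ : ∀ i : ℤ, (i : ℝ) * ω ≤ θ i ∧ θ i < ((i : ℝ) + 1) * ω)
    (k : Fin (m + 1) → ℝ) (hk : ∀ j, 0 < k j)
    (l : Fin (m + 1) → ℝ) (lJ : ℝ) (hl : ∀ j, 0 ≤ l j) (hlJ : 0 ≤ lJ)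
    (w₀ : (Fin (m + 1) → ℝ) → ℝ) (w : Fin (m + 1) → ℝ → ℝ → ℝ) (u₀ : ℝ → ℝ)
    (hw₀meas : Measurable w₀) (hwmeas : ∀ j, Measurable fun p : ℝ × ℝ => w j p.1 p.2)
    (hu₀meas : Measurable u₀)
    (σ : ℝ) (hσ : 0 < σ) (hσk : ∀ j, σ < k j)
    (hw₀bd : ∀ v : Fin (m + 1) → ℝ, |w₀ v| ≤ l 0 * Real.sqrt (2 * m) * eNorm v)
    (hwbd : ∀ j, j ≠ 0 → ∀ a b : ℝ, |w j a b| ≤ l j * (|a| + |b|))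
    (hu₀bd : ∀ z : ℝ, |u₀ z| ≤ lJ * |z|)
    (δ K : ℝ) (hδ : 0 ≤ δ) (hK : 0 ≤ K)
    (v0 : Fin (m + 1) → ℝ) (hv0 : eNorm v0 ≤ δ)
    (ψ : ℝ → Fin (m + 1) → ℝ) (hψmeas : Measurable ψ)
    (hψbd : ∀ t : ℝ, 0 ≤ t → eNorm (ψ t) ≤ K * Real.exp (-σ * t)) :
    ∀ t : ℝ, 0 ≤ t →
      |PiOp m θ k w₀ w u₀ v0 ψ t 0| ≤
        Real.exp (-σ * t) * (δ + K * (l 0 * Real.sqrt (2 * m) / (k 0 - σ) + lJ * Real.exp ((k 0 - σ) * ω) / (1 - Real.exp (-((k 0 - σ) * ω))))) ∧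
      ∀ j, j ≠ 0 → |PiOp m θ k w₀ w u₀ v0 ψ t j| ≤
        Real.exp (-σ * t) * (δ + K * (2 * l j / (k j - σ))) :=
  stmt12_general m ω hω θ hθ k l lJ hl hlJ w₀ w u₀ σ hσk hw₀bd hwbd hu₀bd δ K hK v0 hv0 ψ hψbd
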